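/- arXiv:0810.2712 — 3 statements merged into one kernel-verified Lean document; each statement's English description precedes it below -/
import Mathlib

section
/- In the Einstein–Straus construction, the function R(τ) = a(τ)r₀, where a solves the Friedmann equation (ȧ/a)² + k/a² − C/a³ − Λ/3 = 0 and r₀ is constant, satisfies the radial geodesic equation of Schwarzschild–de Sitter Ṙ² + V(R) = e² with V(R) = 1 − 2m/R − (Λ/3)R², provided m = (C/2)r₀³ and e² = 1 − k r₀². -/
/-! Multiplying the Friedmann equation by `a²` gives the energy equation
`ȧ² = C/a + (Λ/3)a² − k` of a test particle; scaling by `r₀²` turns it into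
`Ṙ² = 2m/R + (Λ/3)R² − kr₀²`, which is `Ṙ² + V(R) = 1 − kr₀²`. -/

theorem sq_deriv_eq_of_friedmann {a da k C Λ : ℝ} (ha : a ≠ 0)
    (h : (da / a) ^ 2 + k / a ^ 2 - C / a ^ 3 - Λ / 3 = 0) :
    da ^ 2 = C / a + Λ / 3 * a ^ 2 - k := by
  field_simp at h ⊢
  linear_combination h

theorem two_mul_half_mul_pow_three_div_mul (C a r : ℝ) :
    2 * ((C / 2) * r ^ 3) / (a * r) = C * r ^ 2 / a := by
  rcases eq_or_ne r 0 with rfl | hr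
  · simp
  · field_simp

theorem radial_energy_of_friedmann {a da k C Λ : ℝ} (r₀ : ℝ) (ha : a ≠ 0)
    (h : (da / a) ^ 2 + k / a ^ 2 - C / a ^ 3 - Λ / 3 = 0) :
    (da * r₀) ^ 2 + (1 - 2 * ((C / 2) * r₀ ^ 3) / (a * r₀) - (Λ / 3) * (a * r₀) ^ 2)
      = 1 - k * r₀ ^ 2 := by
  rw [two_mul_half_mul_pow_three_div_mul, mul_pow, sq_deriv_eq_of_friedmann ha h]
  ring

theorem einstein_straus_matching_geodesic_general (a : ℝ → ℝ) (k C Λ r₀ : ℝ)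
    (hapos : ∀ τ, 0 < a τ)
    (hFried : ∀ τ, (deriv a τ / a τ) ^ 2 + k / a τ ^ 2 - C / a τ ^ 3 - Λ / 3 = 0) :
    ∀ τ, (deriv (fun s => a s * r₀) τ) ^ 2 +
        (1 - 2 * ((C / 2) * r₀ ^ 3) / (a τ * r₀) - (Λ / 3) * (a τ * r₀) ^ 2)
      = 1 - k * r₀ ^ 2 := fun τ => by
  rw [deriv_mul_const_field]
  exact radial_energy_of_friedmann r₀ (hapos τ).ne' (hFried τ)

/-- Einstein–Straus matching: if `a` solves the Friedmann equation
`(ȧ/a)² + k/a² − C/a³ − Λ/3 = 0`, then `R(τ) = a(τ)r₀` satisfies the radial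
Schwarzschild–de Sitter geodesic equation `Ṙ² + V(R) = 1 − kr₀²` with
`V(R) = 1 − 2m/R − (Λ/3)R²` and `m = (C/2)r₀³`. -/
theorem einstein_straus_matching_geodesic (a : ℝ → ℝ) (k C Λ r₀ : ℝ)
    (hC : 0 < C) (hr₀ : 0 < r₀) (hk : k * r₀ ^ 2 < 1)
    (ha : Differentiable ℝ a) (hapos : ∀ τ, 0 < a τ)
    (hFried : ∀ τ, (deriv a τ / a τ) ^ 2 + k / a τ ^ 2 - C / a τ ^ 3 - Λ / 3 = 0) :
    ∀ τ, (deriv (fun s => a s * r₀) τ) ^ 2 +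
        (1 - 2 * ((C / 2) * r₀ ^ 3) / (a τ * r₀) - (Λ / 3) * (a τ * r₀) ^ 2)
      = 1 - k * r₀ ^ 2 :=
  einstein_straus_matching_geodesic_general a k C Λ r₀ hapos hFried
end

section
/- For corner-cube reflection k ↦ k' = 2 g(γ̇,k)·γ̇ − k off a worldline with unit timelike tangent γ̇, the ratio of outgoing to incoming frequencies as measured by an observer u at the reflection event is ω'/ω = 2·g(u,γ̇)·g(γ̇,k)/g(u,k) − 1 = 2·(1 − β_u^{k̂}(γ̇))/(1 − β_u(γ̇)²) − 1. -/
/-- Corner-cube reflection `k ↦ k' = 2g(γ̇,k)γ̇ − k`: the ratio of outgoing to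
incoming frequency measured by `u` is
`ω'/ω = 2 g(u,γ̇)g(γ̇,k)/g(u,k) − 1 = 2(1 − β_u^{k̂}(γ̇))/(1 − β_u(γ̇)²) − 1`. -/
theorem corner_cube_reflection_frequency {V : Type*} [AddCommGroup V] [Module ℝ V]
    (g : V →ₗ[ℝ] V →ₗ[ℝ] ℝ) (hsymm : ∀ x y, g x y = g y x)
    (u γ k : V) (hu : g u u = 1) (hγ : g γ γ = 1) (huγ : 0 < g u γ)
    (hk : g k k = 0) (hωpos : 0 < g u k) :
    g u ((2 * g γ k) • γ - k) / g u k
        = 2 * g u γ * g γ k / g u k - 1 ∧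
    g u ((2 * g γ k) • γ - k) / g u k
        = 2 * (1 - (-(g ((g u k)⁻¹ • (k - g k u • u))
              ((g γ u)⁻¹ • (γ - g γ u • u)))))
            / (1 - (-(g ((g γ u)⁻¹ • (γ - g γ u • u))
              ((g γ u)⁻¹ • (γ - g γ u • u))))) - 1 := by
  have hγu : g γ u = g u γ := hsymm γ u
  have hku : g k u = g u k := hsymm k u
  have hkγ : g k γ = g γ k := hsymm k γ
  have h1 : g u k ≠ 0 := ne_of_gt hωpos
  have h2 : g u γ ≠ 0 := ne_of_gt huγ
  simp only [map_sub, map_smul, map_add, LinearMap.sub_apply, LinearMap.smul_apply,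
    smul_eq_mul, hγu, hku, hkγ, hu, hγ]
  constructor
  · field_simp
  · have hden : (1 : ℝ) - -((g u γ)⁻¹ * ((g u γ)⁻¹ * (1 - g u γ * g u γ)
        - g u γ * ((g u γ)⁻¹ * (g u γ - g u γ * 1)))) = ((g u γ)⁻¹)^2 := by
      field_simp
      ring
    rw [hden]
    field_simp
    ring
end

section
/- The exact FLRW two-way Doppler formula for radial motion, ω₂/ω₀ = (a₀/a₂)·[(1−β)/(1+β)] combined with dt₁/dt₂ = (a₁/a₂)(1+β)^{−1}, yields the approximate tracking formula −(1/2)·d/dt₂(ω₂/ω₀) = α(1 − 3β − 3HΔt) + Hβ + O(β³, (HΔt)², βHΔt·β), where α = (1/c)dβ/dt₁ is the radial acceleration over c; in particular, expanding (a₀a₁/a₂²)·{α(1+β)^{−3} + (1/2)[ȧ₂/a₁ − (ȧ₀/a₁)((1−β)/(1+β))]((1−β)/(1+β))} to the stated order in β and HΔt reproduces α(1 − 3β − 3HΔt) + Hβ. -/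
/-! Over the common denominator `(1 + β)³` the error of the approximation is a polynomial in `ε`
all of whose terms have degree at least three. Dividing out `ε³` leaves a function continuous at
`0`, hence bounded near `0`. -/

open Filter Topology

theorem exists_abs_le_mul_pow_of_eventuallyEq_pow_mul {f g : ℝ → ℝ} (n : ℕ)
    (hg : ContinuousAt g 0) (hfg : f =ᶠ[𝓝 0] fun ε => ε ^ n * g ε) :
    ∃ C δ : ℝ, 0 < C ∧ 0 < δ ∧ ∀ ε : ℝ, 0 < ε → ε < δ → |f ε| ≤ C * ε ^ n := by
  have hbound : ∀ᶠ ε in 𝓝 0, |g ε| < |g 0| + 1 :=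
    hg.abs.eventually_lt continuousAt_const (lt_add_one _)
  obtain ⟨δ, hδ, hδf⟩ := Metric.eventually_nhds_iff.mp (hfg.and hbound)
  refine ⟨|g 0| + 1, δ, by positivity, hδ, fun ε hε hεδ => ?_⟩
  obtain ⟨hf, hgε⟩ := hδf (by rwa [Real.dist_0_eq_abs, abs_of_pos hε])
  rw [hf, abs_mul, abs_of_pos (pow_pos hε n), mul_comm]
  exact mul_le_mul_of_nonneg_right hgε.le (pow_nonneg hε.le n)

/-- The exact rate `(a₀a₁/a₂²){α(1+β)⁻³ + ½[ȧ₂/a₁ − (ȧ₀/a₁)(1−β)/(1+β)](1−β)/(1+β)}` with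
`β = bε`, `HΔt = dε`, `α = Aε` (units with `Δt = 1`). -/
noncomputable def dopplerRate (b d A ε : ℝ) : ℝ :=
  (1 - 2 * (d * ε)) * (1 - d * ε) *
    ((A * ε) * (1 + b * ε)⁻¹ ^ 3 +
      (1 / 2) * ((d * ε) - (d * ε) * ((1 - b * ε) / (1 + b * ε))) *
        ((1 - b * ε) / (1 + b * ε)))

def dopplerRateApprox (b d A ε : ℝ) : ℝ :=
  (A * ε) * (1 - 3 * (b * ε) - 3 * (d * ε)) + (d * ε) * (b * ε)

def dopplerRateRemainder (b d A ε : ℝ) : ℝ :=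
  (2 * d ^ 2 * A + 9 * b * d * A - 3 * b * d ^ 2 + 6 * b ^ 2 * A - 3 * b ^ 2 * d)
    + ε * (2 * b * d ^ 3 + 9 * b ^ 2 * d * A + 8 * b ^ 3 * A - 4 * b ^ 3 * d)
    + ε ^ 2 * (3 * b ^ 3 * d * A + 3 * b ^ 3 * d ^ 2 + 3 * b ^ 4 * A - b ^ 4 * d)
    - ε ^ 3 * (2 * b ^ 3 * d ^ 3)

theorem dopplerRate_sub_approx {b d A ε : ℝ} (h : 1 + b * ε ≠ 0) :
    dopplerRate b d A ε - dopplerRateApprox b d A ε =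
      ε ^ 3 * (dopplerRateRemainder b d A ε / (1 + b * ε) ^ 3) := by
  -- the form in which `field_simp` looks for the denominator
  have h' : 1 + ε * b ≠ 0 := by rwa [mul_comm]
  unfold dopplerRate dopplerRateApprox dopplerRateRemainder
  field_simp
  ring

/-- Expanding the exact two-way FLRW Doppler-rate expression
`(a₀a₁/a₂²){α(1+β)⁻³ + (1/2)[ȧ₂/a₁ − (ȧ₀/a₁)((1−β)/(1+β))]((1−β)/(1+β))}`
with `a₀/a₂ = 1 − 2HΔt`, `a₁/a₂ = 1 − HΔt`, `ȧᵢ/a₁ = H`, keeping quadratic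
terms in `β`, linear terms in `HΔt`, and mixed terms `βHΔt` (all of order `ε`,
with `β = bε`, `HΔt = dε`, `α = Aε` in units `Δt = 1`, hence `H = dε`),
yields `α(1 − 3β − 3HΔt) + Hβ` up to `O(ε³)`. -/
theorem flrw_doppler_rate_expansion (b d A : ℝ) :
    ∃ C δ : ℝ, 0 < C ∧ 0 < δ ∧ ∀ ε : ℝ, 0 < ε → ε < δ →
      |(1 - 2 * (d * ε)) * (1 - d * ε) *
          ((A * ε) * (1 + b * ε)⁻¹ ^ 3 +
            (1 / 2) * ((d * ε) - (d * ε) * ((1 - b * ε) / (1 + b * ε))) *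
              ((1 - b * ε) / (1 + b * ε)))
        - ((A * ε) * (1 - 3 * (b * ε) - 3 * (d * ε)) + (d * ε) * (b * ε))|
      ≤ C * ε ^ 3 := by
  have hden : ContinuousAt (fun ε : ℝ => 1 + b * ε) 0 := by fun_prop
  have hden_ne : ∀ᶠ ε in 𝓝 (0 : ℝ), 1 + b * ε ≠ 0 :=
    hden.eventually_ne (by simp)
  have hcont : ContinuousAt (fun ε => dopplerRateRemainder b d A ε / (1 + b * ε) ^ 3) 0 := by
    unfold dopplerRateRemainder
    exact ContinuousAt.div (by fun_prop) (by fun_prop) (by simp)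
  exact exists_abs_le_mul_pow_of_eventuallyEq_pow_mul 3 hcont
    (hden_ne.mono fun ε h => dopplerRate_sub_approx h)
end
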